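/- arXiv:1603.00731 — 2 statements merged into one kernel-verified Lean document; each statement's English description precedes it below -/
import Mathlib

section
/- For every integer k ≥ 2, writing A_k = ⋃_{j=k}^∞ J_j where J_j = S_j([0,1]), one has P(A_k) > 0 and (1/P(A_k)) · ∫_{A_k} x dP(x) = 1 − (8/7)·(1/2^k). -/
/-! Invariance gives `∫ g dP = ∑ⱼ pⱼ ∫ g ∘ Sⱼ dP`. Since `Sⱼ` maps `[0,1] ⊇ supp P` into `Jⱼ` and
the `Jⱼ` are pairwise disjoint, taking `g = 1_{A_k} · h` keeps exactly the terms `j ≥ k`; as `Sⱼ` is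
affine, `P(A_k)` and `∫_{A_k} x dP` become geometric series in `1/2` and `1/4` involving the mean
`E = ∫ x dP`. The same identity for `g = id` over all `j` reads `E = E/16 + 3/4 + (E - 4)/16`, so
`E = 4/7`, and then `P(A_k) = 3/2^k`, `∫_{A_k} x dP = 3/2^k - (24/7)/4^k`. -/

open MeasureTheory

noncomputable section

/-- The contractive similarity `S j x = x / 2^(j+1) + 1 - 1/2^(j-1)` (used for `j ≥ 1`). -/
def S (j : ℕ) (x : ℝ) : ℝ := x / 2 ^ (j + 1) + 1 - 1 / 2 ^ (j - 1)

/-- The similarity ratio `s j = 1/2^(j+1)`. -/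
def s (j : ℕ) : ℝ := 1 / 2 ^ (j + 1)

/-- The probability vector: `p 1 = 1/4`, `p j = 3/2^(j+1)` for `j ≥ 2`. -/
def p (j : ℕ) : ℝ := if j = 1 then 1 / 4 else 3 / 2 ^ (j + 1)

/-- `Sw ω = S_{ω_1} ∘ ⋯ ∘ S_{ω_k}`. -/
def Sw (ω : List ℕ) : ℝ → ℝ := ω.foldr (fun j f => S j ∘ f) id

/-- `pw ω = p_{ω_1} ⋯ p_{ω_k}`. -/
def pw (ω : List ℕ) : ℝ := (ω.map p).prod

/-- `sw ω = s_{ω_1} ⋯ s_{ω_k}`. -/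
def sw (ω : List ℕ) : ℝ := (ω.map s).prod

/-- The basic interval `J_ω = S_ω([0,1])`. -/
def Jw (ω : List ℕ) : Set ℝ := Sw ω '' Set.Icc 0 1

/-- The last letter of a word (junk value `0` for the empty word). -/
def wlast (ω : List ℕ) : ℕ := ω.getLastD 0

/-- `wext ω j = ω^-(ω_k + j)`: the word `ω` with its last letter increased by `j`. -/
def wext (ω : List ℕ) (j : ℕ) : List ℕ := ω.dropLast ++ [wlast ω + j]

/-- `J_{(ω,∞)} = ⋃_{j=1}^∞ J_{ω^-(ω_k+j)}`. -/
def Jinf (ω : List ℕ) : Set ℝ := ⋃ j : ℕ, Jw (wext ω (j + 1))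

/-- `a(ω) = S_ω(4/7)`. -/
def aw (ω : List ℕ) : ℝ := Sw ω (4 / 7)

/-- `a(ω,∞) = S_{ω^-(ω_k+1)}(4/7) + (8/7) s_{ω^-(ω_k+1)}`. -/
def ainf (ω : List ℕ) : ℝ := Sw (wext ω 1) (4 / 7) + (8 / 7) * sw (wext ω 1)

/-- A (nonempty) word over the alphabet `{1, 2, 3, …}`. -/
def IsWord (ω : List ℕ) : Prop := ω ≠ [] ∧ ∀ i ∈ ω, 1 ≤ i

/-- The invariance relation `P(A) = ∑_{j=1}^∞ p_j P(S_j⁻¹ A)`. -/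
def Invariant (P : Measure ℝ) : Prop :=
  ∀ A : Set ℝ, MeasurableSet A →
    P A = ∑' j : ℕ, ENNReal.ofReal (p (j + 1)) * P (S (j + 1) ⁻¹' A)

/-- The distortion error `∫ min_{a ∈ α} (x-a)² dP` of a set `α ⊆ ℝ`. -/
def distortion (P : Measure ℝ) (α : Set ℝ) : ℝ :=
  ∫ x, (⨅ a : α, (x - (a : ℝ)) ^ 2) ∂P

/-- The `n`-th quantization error for `P`. -/
def quantErr (P : Measure ℝ) (n : ℕ) : ℝ :=
  sInf {r : ℝ | ∃ α : Set ℝ, 1 ≤ α.ncard ∧ α.ncard ≤ n ∧ r = distortion P α}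

/-- `α` is an optimal set of `n`-means for `P`. -/
def IsOptimal (P : Measure ℝ) (n : ℕ) (α : Set ℝ) : Prop :=
  1 ≤ α.ncard ∧ α.ncard ≤ n ∧ distortion P α = quantErr P n

/-- `E(a(ω)) = ∫_{J_ω} (x - a(ω))² dP`. -/
def Ea (P : Measure ℝ) (ω : List ℕ) : ℝ := ∫ x in Jw ω, (x - aw ω) ^ 2 ∂P

/-- `E(a(ω,∞)) = ∫_{J_{(ω,∞)}} (x - a(ω,∞))² dP`. -/
def Eainf (P : Measure ℝ) (ω : List ℕ) : ℝ := ∫ x in Jinf ω, (x - ainf ω) ^ 2 ∂P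

/-- The Voronoi region `M(a|α)`. -/
def voronoi (α : Set ℝ) (a : ℝ) : Set ℝ := {x : ℝ | ∀ b ∈ α, |x - a| ≤ |x - b|}

open Set

lemma continuous_S (n : ℕ) : Continuous (S n) := by
  unfold S; fun_prop

lemma S_eq_affine (n : ℕ) (x : ℝ) : S n x = s n * x + S n 0 := by
  simp only [S, s]; ring

lemma Jw_singleton_subset_Ico (n : ℕ) :
    Jw [n + 1] ⊆ Ico (1 - (1 / 2) ^ n) (1 - (1 / 2) ^ (n + 1)) := by
  rintro _ ⟨x, ⟨hx0, hx1⟩, rfl⟩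
  simp only [Sw, List.foldr_cons, List.foldr_nil, Function.comp_id, S, Nat.add_sub_cancel,
    div_pow, one_pow, pow_succ, mem_Ico]
  constructor
  · have : 0 ≤ x / (2 ^ n * 2 * 2) := by positivity
    linarith
  · rw [← sub_pos]
    field_simp
    linarith

lemma Jw_singleton_disjoint {m n : ℕ} (hmn : m ≠ n) : Disjoint (Jw [m + 1]) (Jw [n + 1]) := by
  have hmono : Monotone fun n : ℕ => 1 - (1 / 2 : ℝ) ^ n := fun _ _ hab =>
    sub_le_sub_left (pow_le_pow_of_le_one (by norm_num) (by norm_num) hab) 1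
  exact (hmono.pairwise_disjoint_on_Ico_succ hmn).mono
    (Jw_singleton_subset_Ico m) (Jw_singleton_subset_Ico n)

def tailUnion (k : ℕ) : Set ℝ := ⋃ j : ℕ, Jw [k + j]

lemma measurableSet_tailUnion (k : ℕ) : MeasurableSet (tailUnion k) :=
  .iUnion fun _ => (isCompact_Icc.image (continuous_S _)).isClosed.measurableSet

lemma S_mem_tailUnion_iff {k n : ℕ} (hk : 1 ≤ k) {x : ℝ} (hx : x ∈ Icc 0 1) :
    S (n + 1) x ∈ tailUnion k ↔ k ≤ n + 1 := by
  have hJ : S (n + 1) x ∈ Jw [n + 1] := ⟨x, hx, rfl⟩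
  constructor
  · intro hmem
    obtain ⟨i, hi⟩ := mem_iUnion.1 hmem
    rw [show k + i = k - 1 + i + 1 by omega] at hi
    by_contra hlt
    exact disjoint_left.1 (Jw_singleton_disjoint (show n ≠ k - 1 + i by omega)) hJ hi
  · intro hkn
    refine mem_iUnion.2 ⟨n + 1 - k, ?_⟩
    rwa [show k + (n + 1 - k) = n + 1 by omega]

lemma p_nonneg (j : ℕ) : 0 ≤ p j := by
  unfold p; split <;> positivity

lemma hasSum_p_tail {k : ℕ} (hk : 2 ≤ k) : HasSum (fun j => p (k + j)) (3 / 2 ^ k) := by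
  have hgeom := hasSum_geometric_two.mul_left (3 / 2 ^ (k + 1))
  rw [show 3 / 2 ^ (k + 1) * 2 = (3 / 2 ^ k : ℝ) by rw [pow_succ]; field_simp] at hgeom
  refine (funext fun j => ?_ : _ = fun j => p (k + j)) ▸ hgeom
  rw [p, if_neg (by omega), div_pow, one_pow, show k + j + 1 = k + 1 + j by omega]
  field_simp
  ring

lemma hasSum_p_mul_S_tail (E : ℝ) {k : ℕ} (hk : 2 ≤ k) :
    HasSum (fun j => p (k + j) * (s (k + j) * E + S (k + j) 0)) (3 / 2 ^ k + (E - 4) / 4 ^ k) := by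
  obtain ⟨m, rfl⟩ : ∃ m, k = m + 2 := ⟨k - 2, by omega⟩
  have hgeom := (hasSum_geometric_two.mul_left (3 / 2 ^ (m + 3))).add
    ((hasSum_geometric_of_lt_one (r := (1 / 2) ^ 2) (by norm_num) (by norm_num)).mul_left
      (3 * (E - 4) / (2 ^ (m + 3)) ^ 2))
  rw [show 3 / 2 ^ (m + 3) * 2 + 3 * (E - 4) / (2 ^ (m + 3)) ^ 2 * (1 - (1 / 2) ^ 2)⁻¹ =
    3 / 2 ^ (m + 2) + (E - 4) / 4 ^ (m + 2) by
      rw [show (4 : ℝ) ^ (m + 2) = (2 ^ (m + 2)) ^ 2 by rw [pow_right_comm]; norm_num]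
      field_simp
      ring] at hgeom
  refine (funext fun j => ?_ :
    _ = fun j => p (m + 2 + j) * (s (m + 2 + j) * E + S (m + 2 + j) 0)) ▸ hgeom
  rw [p, if_neg (by omega)]
  simp only [s, S, show m + 2 + j - 1 = m + 1 + j by omega, pow_add, div_pow, one_pow]
  rw [pow_right_comm (2 : ℝ) 2 j]
  field_simp
  ring

section InvariantMeasure

variable {P : Measure ℝ}

lemma measure_eq_sum_map (hinv : Invariant P) :
    P = Measure.sum fun j => ENNReal.ofReal (p (j + 1)) • P.map (S (j + 1)) := by
  ext A hA
  rw [hinv A hA, Measure.sum_apply _ hA]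
  congr 1 with j
  rw [Measure.smul_apply, Measure.map_apply (continuous_S _).measurable hA, smul_eq_mul]

lemma hasSum_integral_comp_S (hinv : Invariant P) {g : ℝ → ℝ} (hg : Measurable g)
    (hgi : Integrable g P) :
    HasSum (fun j => p (j + 1) * ∫ x, g (S (j + 1) x) ∂P) (∫ x, g x ∂P) := by
  have hsum := hasSum_integral_measure (measure_eq_sum_map hinv ▸ hgi)
  rw [← measure_eq_sum_map hinv] at hsum
  refine (funext fun j => ?_ : _ = fun j => p (j + 1) * ∫ x, g (S (j + 1) x) ∂P) ▸ hsum
  rw [integral_smul_measure, ENNReal.toReal_ofReal (p_nonneg _), smul_eq_mul,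
    integral_map (continuous_S _).aemeasurable hg.aestronglyMeasurable]

variable [IsProbabilityMeasure P]

lemma ae_mem_Icc (hsupp : P (Icc 0 1) = 1) : ∀ᵐ x ∂P, x ∈ Icc (0 : ℝ) 1 :=
  (mem_ae_iff_prob_eq_one measurableSet_Icc).2 hsupp

lemma integrable_of_continuous (hsupp : P (Icc 0 1) = 1) {h : ℝ → ℝ} (hh : Continuous h) :
    Integrable h P := by
  rw [← Measure.restrict_eq_self_of_ae_mem (ae_mem_Icc hsupp)]
  exact hh.continuousOn.integrableOn_compact isCompact_Icc

lemma integral_S (hsupp : P (Icc 0 1) = 1) (n : ℕ) :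
    ∫ x, S n x ∂P = s n * ∫ x, x ∂P + S n 0 := by
  rw [integral_congr_ae (.of_forall (S_eq_affine n)),
    integral_add ((integrable_of_continuous hsupp continuous_id').const_mul _) (integrable_const _),
    integral_const_mul, integral_const, probReal_univ, one_smul]

lemma hasSum_setIntegral_tailUnion (hsupp : P (Icc 0 1) = 1) (hinv : Invariant P)
    {h : ℝ → ℝ} (hh : Continuous h) {k : ℕ} (hk : 1 ≤ k) :
    HasSum (fun j => p (k + j) * ∫ x, h (S (k + j) x) ∂P) (∫ x in tailUnion k, h x ∂P) := by
  have hA := measurableSet_tailUnion k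
  have hall := hasSum_integral_comp_S hinv (hh.measurable.indicator hA)
    ((integrable_of_continuous hsupp hh).indicator hA)
  rw [integral_indicator hA] at hall
  have hcomp (n : ℕ) : ∫ x, (tailUnion k).indicator h (S (n + 1) x) ∂P =
      if k ≤ n + 1 then ∫ x, h (S (n + 1) x) ∂P else 0 := by
    split_ifs with hn
    · refine integral_congr_ae ?_
      filter_upwards [ae_mem_Icc hsupp] with x hx
      exact indicator_of_mem ((S_mem_tailUnion_iff hk hx).2 hn) h
    · refine integral_eq_zero_of_ae ?_
      filter_upwards [ae_mem_Icc hsupp] with x hx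
      exact indicator_of_notMem (mt (S_mem_tailUnion_iff hk hx).1 hn) h
  have htail := (hasSum_nat_add_iff' (k - 1)).2 hall
  rw [Finset.sum_eq_zero fun i hi => by
    rw [hcomp, if_neg (by simp at hi; omega), mul_zero], sub_zero] at htail
  have hshift : (fun j => p (j + (k - 1) + 1) *
      ∫ x, (tailUnion k).indicator h (S (j + (k - 1) + 1) x) ∂P) =
      fun j => p (k + j) * ∫ x, h (S (k + j) x) ∂P := by
    funext j
    rw [hcomp, if_pos (by omega), show j + (k - 1) + 1 = k + j by omega]
  rwa [hshift] at htail

lemma integral_id_eq_four_sevenths (hsupp : P (Icc 0 1) = 1) (hinv : Invariant P) :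
    ∫ x, x ∂P = 4 / 7 := by
  have hall := hasSum_integral_comp_S hinv measurable_id'
    (integrable_of_continuous hsupp continuous_id')
  simp only [integral_S hsupp] at hall
  have htail := (hasSum_nat_add_iff' 1).2 hall
  set E := ∫ x, x ∂P
  rw [show (fun j => p (j + 1 + 1) * (s (j + 1 + 1) * E + S (j + 1 + 1) 0)) =
      fun j => p (2 + j) * (s (2 + j) * E + S (2 + j) 0) by
    funext j; rw [show j + 1 + 1 = 2 + j by omega]] at htail
  have := htail.unique (hasSum_p_mul_S_tail E le_rfl)
  norm_num [p, s, S] at this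
  linarith

end InvariantMeasure

/-- For `k ≥ 2` and `A_k = ⋃_{j=k}^∞ J_j`, one has `P(A_k) > 0` and
`(1/P(A_k)) ∫_{A_k} x dP = 1 - (8/7)(1/2^k)`. -/
theorem stmt_2 (P : Measure ℝ) [IsProbabilityMeasure P]
    (hsupp : P (Set.Icc 0 1) = 1) (hinv : Invariant P) (k : ℕ) (hk : 2 ≤ k) :
    0 < P (⋃ j : ℕ, Jw [k + j]) ∧
      (1 / (P (⋃ j : ℕ, Jw [k + j])).toReal) * ∫ x in (⋃ j : ℕ, Jw [k + j]), x ∂P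
        = 1 - (8 / 7) * (1 / 2 ^ k) := by
  have hmass : P.real (tailUnion k) = 3 / 2 ^ k := by
    have h := hasSum_setIntegral_tailUnion hsupp hinv continuous_const (h := fun _ => (1 : ℝ))
      (by omega : 1 ≤ k)
    simp only [integral_const, probReal_univ, measureReal_restrict_apply_univ, smul_eq_mul,
      mul_one] at h
    exact h.unique (hasSum_p_tail hk)
  have hmean : ∫ x in tailUnion k, x ∂P = 3 / 2 ^ k + (4 / 7 - 4) / 4 ^ k := by
    have h := hasSum_setIntegral_tailUnion hsupp hinv continuous_id' (by omega : 1 ≤ k)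
    simp only [integral_S hsupp, integral_id_eq_four_sevenths hsupp hinv] at h
    exact h.unique (hasSum_p_mul_S_tail _ hk)
  change 0 < P (tailUnion k) ∧ 1 / P.real (tailUnion k) * ∫ x in tailUnion k, x ∂P = _
  refine ⟨pos_iff_ne_zero.2 ((measureReal_ne_zero_iff).1 (by rw [hmass]; positivity)), ?_⟩
  rw [hmass, hmean, show (4 : ℝ) ^ k = (2 ^ k) ^ 2 by rw [pow_right_comm]; norm_num]
  field_simp
  ring
end
end

section
/- Let ω, τ be nonempty words over ℕ with p_ω = p_τ, with last letters ω_k and τ_m respectively. Then: (i) E(a(ω)) = E(a(τ)); (ii) if ω_k = τ_m, then E(a(ω,∞)) = E(a(τ,∞)); (iii) if ω_k ≥ 2 and τ_m = 1, then E(a(ω,∞)) = (1/3)·E(a(τ,∞)); (iv) if ω_k = 1 and τ_m ≥ 2, then E(a(ω,∞)) = 3·E(a(τ,∞)). -/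
open MeasureTheory

noncomputable section

/-!
Each `S_ω` is affine with ratio `s_ω`. The basic intervals `S_j [0,1]` are pairwise disjoint and
`P` lives on `[0,1]`, so `P` restricted to `S_ω D` (for `D ⊆ [0,1]`) is `p_ω` times the
push-forward under `S_ω` of `P` restricted to `D`. Hence `E(a(ω)) = p_ω s_ω² V` and
`E(a(ω,∞)) = p_ω s_ω² R(ω_k)`, where `R` depends only on the last letter.

The tail `⋃_{j > k} J_j` is the image of `⋃_{j > 1} J_j` under the homothety of ratio
`2^{-(k-1)}` centred at `1`, which rescales the weights `p_j` (`j ≥ 2`) by the same factor;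
comparing with `p_1 = 1/4` gives `R(k) = R(1)/3` for `k ≥ 2`.

Finally `p_ω = 3^c s_ω` and `s_ω = 2^{-e}` with `c, e ∈ ℕ`, so `p_ω = p_τ` forces
`s_ω = s_τ` by unique factorisation.
-/

open Set Function

lemma s_pos (j : ℕ) : 0 < s j := by unfold s; positivity

lemma S_apply_eq (j : ℕ) (x : ℝ) : S j x = s j * x + S j 0 := by
  simp only [S, s]; ring

lemma S_continuous (j : ℕ) : Continuous (S j) := by unfold S; fun_prop

lemma S_injective (j : ℕ) : Injective (S j) := fun x y h => by
  rw [S_apply_eq j x, S_apply_eq j y] at h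
  exact mul_left_cancel₀ (s_pos j).ne' (add_right_cancel h)

lemma measurableEmbedding_S (j : ℕ) : MeasurableEmbedding (S j) :=
  (S_continuous j).measurableEmbedding (S_injective j)

@[simp] lemma Sw_nil : Sw [] = id := rfl

@[simp] lemma Sw_cons (j : ℕ) (ω : List ℕ) : Sw (j :: ω) = S j ∘ Sw ω := rfl

@[simp] lemma Sw_singleton (j : ℕ) : Sw [j] = S j := rfl

lemma Sw_append (ω τ : List ℕ) : Sw (ω ++ τ) = Sw ω ∘ Sw τ := by
  induction ω with
  | nil => rfl
  | cons j ω ih => rw [List.cons_append, Sw_cons, Sw_cons, ih]; rfl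

@[simp] lemma pw_cons (j : ℕ) (ω : List ℕ) : pw (j :: ω) = p j * pw ω := by simp [pw]

@[simp] lemma sw_cons (j : ℕ) (ω : List ℕ) : sw (j :: ω) = s j * sw ω := by simp [sw]

@[simp] lemma pw_singleton (j : ℕ) : pw [j] = p j := by simp [pw]

@[simp] lemma sw_singleton (j : ℕ) : sw [j] = s j := by simp [sw]

lemma pw_append (ω τ : List ℕ) : pw (ω ++ τ) = pw ω * pw τ := by simp [pw]

lemma sw_append (ω τ : List ℕ) : sw (ω ++ τ) = sw ω * sw τ := by simp [sw]

lemma p_pos (j : ℕ) : 0 < p j := by unfold p; split_ifs <;> positivity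

lemma pw_nonneg (ω : List ℕ) : 0 ≤ pw ω :=
  List.prod_nonneg fun _ hx => by
    obtain ⟨j, -, rfl⟩ := List.mem_map.mp hx
    exact (p_pos j).le

lemma sw_pos (ω : List ℕ) : 0 < sw ω :=
  List.prod_pos fun _ hx => by
    obtain ⟨j, -, rfl⟩ := List.mem_map.mp hx
    exact s_pos j

lemma Sw_apply_eq (ω : List ℕ) (x : ℝ) : Sw ω x = sw ω * x + Sw ω 0 := by
  induction ω generalizing x with
  | nil => simp [sw]
  | cons j ω ih =>
    simp only [Sw_cons, comp_apply, sw_cons]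
    rw [S_apply_eq, ih x, S_apply_eq j (Sw ω 0)]
    ring

lemma Sw_sub (ω : List ℕ) (x y : ℝ) : Sw ω x - Sw ω y = sw ω * (x - y) := by
  rw [Sw_apply_eq ω x, Sw_apply_eq ω y]; ring

lemma measurableEmbedding_Sw (ω : List ℕ) : MeasurableEmbedding (Sw ω) := by
  refine Continuous.measurableEmbedding ?_ fun x y h => ?_
  · rw [funext (Sw_apply_eq ω)]; fun_prop
  · have := Sw_sub ω x y
    rw [h, sub_self, eq_comm, mul_eq_zero, sub_eq_zero] at this
    exact this.resolve_left (sw_pos ω).ne'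

lemma S_succ_mapsTo (j : ℕ) :
    MapsTo (S (j + 1)) (Icc 0 1) (Ico (1 - (1 / 2) ^ j) (1 - (1 / 2) ^ (j + 1))) := by
  rintro x ⟨hx0, hx1⟩
  have hq : (0 : ℝ) < (1 / 2) ^ j := by positivity
  have hS : S (j + 1) x = 1 - (1 / 2) ^ j + x * ((1 / 2) ^ j / 4) := by
    simp only [S, Nat.add_sub_cancel, one_div_pow, pow_succ]; ring
  rw [hS, pow_succ]
  constructor <;> nlinarith

lemma S_succ_mapsTo_Icc (j : ℕ) : MapsTo (S (j + 1)) (Icc 0 1) (Icc 0 1) :=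
  (S_succ_mapsTo j).mono_right <| Ico_subset_Icc_self.trans <|
    Icc_subset_Icc (sub_nonneg.2 (pow_le_one₀ (by norm_num) (by norm_num)))
      (sub_le_self _ (by positivity))

lemma pairwise_disjoint_S_succ_image :
    Pairwise (Disjoint on fun j => S (j + 1) '' Icc 0 1) := by
  have hmono : Monotone fun j : ℕ => 1 - (1 / 2 : ℝ) ^ j := fun i j hij => by
    simp only [sub_le_sub_iff_left]
    exact pow_le_pow_of_le_one (by norm_num) (by norm_num) hij
  exact (hmono.pairwise_disjoint_on_Ico_succ).mono fun i j h =>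
    h.mono (S_succ_mapsTo i).image_subset (S_succ_mapsTo j).image_subset

lemma Sw_mapsTo {ω : List ℕ} (hω : ∀ i ∈ ω, 1 ≤ i) :
    MapsTo (Sw ω) (Icc 0 1) (Icc 0 1) := by
  induction ω with
  | nil => exact mapsTo_id _
  | cons j ω ih =>
    obtain ⟨k, rfl⟩ := Nat.exists_eq_add_of_le' (hω j List.mem_cons_self)
    exact (S_succ_mapsTo_Icc k).comp (ih fun i hi => hω i (List.mem_cons_of_mem _ hi))

lemma p_eq_three_pow_mul_s (j : ℕ) : p j = 3 ^ (if j = 1 then 0 else 1) * s j := by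
  rcases eq_or_ne j 1 with rfl | hj
  · norm_num [p, s]
  · simp [p, s, hj, div_eq_mul_inv]

lemma pw_eq_three_pow_mul_sw (ω : List ℕ) : pw ω = 3 ^ ω.countP (· ≠ 1) * sw ω := by
  induction ω with
  | nil => simp [pw, sw]
  | cons j ω ih =>
    rw [pw_cons, sw_cons, ih, p_eq_three_pow_mul_s, List.countP_cons]
    by_cases hj : j = 1 <;> simp [hj, pow_succ] <;> ring

lemma sw_eq_half_pow (ω : List ℕ) : sw ω = (1 / 2) ^ (ω.map (· + 1)).sum := by
  induction ω with
  | nil => simp [sw]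
  | cons j ω ih => rw [sw_cons, ih, s, ← one_div_pow, List.map_cons, List.sum_cons, ← pow_add]

lemma eq_of_three_pow_mul_two_pow_eq {a b e f : ℕ} (h : 3 ^ a * 2 ^ e = 3 ^ b * 2 ^ f) :
    e = f := by
  have := congrArg (fun n => n.factorization 2) h
  simpa [Nat.factorization_mul, Nat.Prime.factorization_pow, Nat.prime_two.factorization_pow,
    Nat.prime_three.factorization_pow] using this

lemma sw_eq_of_pw_eq {ω τ : List ℕ} (h : pw ω = pw τ) : sw ω = sw τ := by
  rw [pw_eq_three_pow_mul_sw, pw_eq_three_pow_mul_sw] at h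
  rw [sw_eq_half_pow, sw_eq_half_pow] at h ⊢
  congr 1
  refine eq_of_three_pow_mul_two_pow_eq (a := τ.countP (· ≠ 1)) (b := ω.countP (· ≠ 1)) ?_
  rw [one_div_pow, one_div_pow] at h
  field_simp at h
  exact_mod_cast (mul_comm _ _).trans h.symm

lemma dropLast_append_wlast {ω : List ℕ} (hne : ω ≠ []) : ω.dropLast ++ [wlast ω] = ω := by
  rw [wlast, List.getLastD_eq_getLast?, List.getLast?_eq_some_getLast hne]
  exact List.dropLast_append_getLast hne

def tailSet (k : ℕ) : Set ℝ := ⋃ i : ℕ, S (k + i + 1) '' Icc 0 1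

lemma tailSet_subset_Icc (k : ℕ) : tailSet k ⊆ Icc 0 1 :=
  iUnion_subset fun _ => (S_succ_mapsTo_Icc _).image_subset

lemma measurableSet_tailSet (k : ℕ) : MeasurableSet (tailSet k) :=
  MeasurableSet.iUnion fun _ => (measurableEmbedding_S _).measurableSet_image' measurableSet_Icc

lemma Jinf_eq_image_tailSet (ω : List ℕ) : Jinf ω = Sw ω.dropLast '' tailSet (wlast ω) := by
  simp only [Jinf, tailSet, image_iUnion, Jw, wext, Sw_append, image_comp, Sw_singleton]
  rfl

-- `S j x + (8/7) s j = S j (x + 8/7)`, so `a(ω,∞) = S_{ω^-}(S_{ω_k+1}(12/7))`.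
lemma ainf_eq (ω : List ℕ) : ainf ω = Sw ω.dropLast (S (wlast ω + 1) (12 / 7)) := by
  rw [ainf, wext, Sw_append, sw_append, Sw_singleton, comp_apply,
    Sw_apply_eq _ (S _ _), Sw_apply_eq _ (S _ (12 / 7)), S_apply_eq _ (4 / 7),
    S_apply_eq _ (12 / 7), sw_singleton]
  ring

def contractToOne (m : ℕ) (y : ℝ) : ℝ := (y - 1) / 2 ^ m + 1

lemma contractToOne_sub (m : ℕ) (x y : ℝ) :
    contractToOne m x - contractToOne m y = (x - y) / 2 ^ m := by
  simp only [contractToOne]; ring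

lemma measurableEmbedding_contractToOne (m : ℕ) : MeasurableEmbedding (contractToOne m) := by
  refine Continuous.measurableEmbedding (by unfold contractToOne; fun_prop) fun x y h => ?_
  have := contractToOne_sub m x y
  rw [h, sub_self, eq_comm, div_eq_zero_iff, sub_eq_zero] at this
  exact this.resolve_right (by positivity)

lemma contractToOne_S (m j : ℕ) (x : ℝ) : contractToOne m (S (j + 1) x) = S (m + j + 1) x := by
  simp only [contractToOne, S, Nat.add_sub_cancel, pow_add]
  field_simp
  ring

lemma p_add_of_two_le (m : ℕ) {j : ℕ} (hj : 2 ≤ j) : p (m + j) = (1 / 2) ^ m * p j := by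
  rw [p, p, if_neg (by omega), if_neg (by omega), add_assoc, pow_add, one_div_pow]
  field_simp

def tailError (P : Measure ℝ) (k : ℕ) : ℝ :=
  ∫ x in tailSet k, (x - S (k + 1) (12 / 7)) ^ 2 ∂P

def tailRatio (P : Measure ℝ) (k : ℕ) : ℝ := tailError P k / (p k * s k ^ 2)

section Measure

variable {P : Measure ℝ}

lemma measure_S_succ_image (hsupp : P (Icc 0 1)ᶜ = 0) (hinv : Invariant P) (j : ℕ) {D : Set ℝ}
    (hD : MeasurableSet D) (hDI : D ⊆ Icc 0 1) :
    P (S (j + 1) '' D) = ENNReal.ofReal (p (j + 1)) * P D := by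
  rw [hinv _ ((measurableEmbedding_S _).measurableSet_image' hD), tsum_eq_single j]
  · rw [(S_injective _).preimage_image]
  · intro i hij
    refine mul_eq_zero_of_right _ (measure_mono_null (fun x hx => ?_) hsupp)
    exact fun hxI => (pairwise_disjoint_S_succ_image hij).ne_of_mem (mem_image_of_mem _ hxI)
      (image_mono hDI hx) rfl

lemma measure_Sw_image (hsupp : P (Icc 0 1)ᶜ = 0) (hinv : Invariant P) {ω : List ℕ}
    (hω : ∀ i ∈ ω, 1 ≤ i) {D : Set ℝ} (hD : MeasurableSet D) (hDI : D ⊆ Icc 0 1) :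
    P (Sw ω '' D) = ENNReal.ofReal (pw ω) * P D := by
  induction ω with
  | nil => simp [pw]
  | cons j ω ih =>
    obtain ⟨k, rfl⟩ := Nat.exists_eq_add_of_le' (hω j List.mem_cons_self)
    have hω' : ∀ i ∈ ω, 1 ≤ i := fun i hi => hω i (List.mem_cons_of_mem _ hi)
    rw [Sw_cons, image_comp, measure_S_succ_image hsupp hinv k
      ((measurableEmbedding_Sw ω).measurableSet_image' hD)
      ((image_mono hDI).trans (Sw_mapsTo hω').image_subset), ih hω', pw_cons,
      ENNReal.ofReal_mul (p_pos _).le, mul_assoc]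

lemma restrict_Sw_image (hsupp : P (Icc 0 1)ᶜ = 0) (hinv : Invariant P) {ω : List ℕ}
    (hω : ∀ i ∈ ω, 1 ≤ i) {D : Set ℝ} (hD : MeasurableSet D) (hDI : D ⊆ Icc 0 1) :
    P.restrict (Sw ω '' D) = ENNReal.ofReal (pw ω) • (P.restrict D).map (Sw ω) := by
  ext B hB
  rw [Measure.restrict_apply hB, Measure.smul_apply, (measurableEmbedding_Sw ω).map_apply,
    Measure.restrict_apply' hD, inter_comm, ← image_inter_preimage,
    measure_Sw_image hsupp hinv hω (hD.inter (hB.preimage (measurableEmbedding_Sw ω).measurable))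
      (inter_subset_left.trans hDI), smul_eq_mul, inter_comm]

lemma setIntegral_Sw_image (hsupp : P (Icc 0 1)ᶜ = 0) (hinv : Invariant P) {ω : List ℕ}
    (hω : ∀ i ∈ ω, 1 ≤ i) {D : Set ℝ} (hD : MeasurableSet D) (hDI : D ⊆ Icc 0 1)
    (g : ℝ → ℝ) :
    ∫ x in Sw ω '' D, g x ∂P = pw ω * ∫ x in D, g (Sw ω x) ∂P := by
  rw [restrict_Sw_image hsupp hinv hω hD hDI, integral_smul_measure,
    (measurableEmbedding_Sw ω).integral_map, ENNReal.toReal_ofReal (pw_nonneg ω), smul_eq_mul]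

lemma Ea_eq (hsupp : P (Icc 0 1)ᶜ = 0) (hinv : Invariant P) {ω : List ℕ}
    (hω : ∀ i ∈ ω, 1 ≤ i) :
    Ea P ω = pw ω * sw ω ^ 2 * ∫ x in Icc 0 1, (x - 4 / 7) ^ 2 ∂P := by
  rw [Ea, Jw, setIntegral_Sw_image hsupp hinv hω measurableSet_Icc subset_rfl]
  simp only [aw, Sw_sub, mul_pow]
  rw [integral_const_mul, mul_assoc]

lemma Eainf_eq (hsupp : P (Icc 0 1)ᶜ = 0) (hinv : Invariant P) {ω : List ℕ}
    (hω : ∀ i ∈ ω, 1 ≤ i) :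
    Eainf P ω = pw ω.dropLast * sw ω.dropLast ^ 2 * tailError P (wlast ω) := by
  rw [Eainf, Jinf_eq_image_tailSet, ainf_eq, setIntegral_Sw_image hsupp hinv
    (fun i hi => hω i (List.dropLast_subset ω hi)) (measurableSet_tailSet _)
    (tailSet_subset_Icc _)]
  simp only [Sw_sub, mul_pow]
  rw [integral_const_mul, tailError, mul_assoc]

lemma measure_inter_tailSet (hsupp : P (Icc 0 1)ᶜ = 0) (hinv : Invariant P) (k : ℕ)
    {B : Set ℝ} (hB : MeasurableSet B) :
    P (B ∩ tailSet k) =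
      ∑' i, ENNReal.ofReal (p (k + i + 1)) * P (S (k + i + 1) ⁻¹' B ∩ Icc 0 1) := by
  rw [tailSet, inter_iUnion, measure_iUnion]
  · refine tsum_congr fun i => ?_
    rw [inter_comm, ← image_inter_preimage, measure_S_succ_image hsupp hinv _
      (measurableSet_Icc.inter (hB.preimage (S_continuous _).measurable)) inter_subset_left,
      inter_comm]
  · exact fun i i' h => (pairwise_disjoint_S_succ_image (by omega : k + i ≠ k + i')).mono
      inter_subset_right inter_subset_right
  · exact fun i => hB.inter ((measurableEmbedding_S _).measurableSet_image' measurableSet_Icc)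

-- `contractToOne m` conjugates `S j` to `S (m + j)`, and for `j ≥ 2` the weights scale
-- by `2⁻ᵐ`.
lemma restrict_tailSet_add (hsupp : P (Icc 0 1)ᶜ = 0) (hinv : Invariant P) {k : ℕ}
    (hk : 1 ≤ k) (m : ℕ) :
    P.restrict (tailSet (m + k)) =
      ENNReal.ofReal ((1 / 2) ^ m) • (P.restrict (tailSet k)).map (contractToOne m) := by
  ext B hB
  have hB' := hB.preimage (measurableEmbedding_contractToOne m).measurable
  rw [Measure.restrict_apply hB, Measure.smul_apply,
    (measurableEmbedding_contractToOne m).map_apply, Measure.restrict_apply hB',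
    measure_inter_tailSet hsupp hinv _ hB, measure_inter_tailSet hsupp hinv _ hB', smul_eq_mul,
    ← ENNReal.tsum_mul_left]
  refine tsum_congr fun i => ?_
  have hpre : S (k + i + 1) ⁻¹' (contractToOne m ⁻¹' B) = S (m + k + i + 1) ⁻¹' B := by
    ext x
    rw [mem_preimage, mem_preimage, mem_preimage, contractToOne_S, add_assoc m k i]
  rw [hpre, ← mul_assoc, ← ENNReal.ofReal_mul (by positivity),
    ← p_add_of_two_le m (by omega : 2 ≤ k + i + 1), add_assoc m k, add_assoc m]

lemma tailError_add (hsupp : P (Icc 0 1)ᶜ = 0) (hinv : Invariant P) {k : ℕ} (hk : 1 ≤ k)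
    (m : ℕ) : tailError P (m + k) = (1 / 8) ^ m * tailError P k := by
  have hsq (x y : ℝ) :
      (contractToOne m x - contractToOne m y) ^ 2 = (1 / 4) ^ m * (x - y) ^ 2 := by
    rw [contractToOne_sub, div_pow, ← pow_mul, pow_mul', one_div_pow]
    norm_num
    ring
  rw [tailError, restrict_tailSet_add hsupp hinv hk m, integral_smul_measure,
    (measurableEmbedding_contractToOne m).integral_map, ENNReal.toReal_ofReal (by positivity),
    smul_eq_mul, ← contractToOne_S]
  simp only [hsq]
  rw [integral_const_mul, tailError, ← mul_assoc, ← mul_pow]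
  norm_num

lemma Eainf_eq_mul_tailRatio (hsupp : P (Icc 0 1)ᶜ = 0) (hinv : Invariant P)
    {ω : List ℕ} (hω : IsWord ω) :
    Eainf P ω = pw ω * sw ω ^ 2 * tailRatio P (wlast ω) := by
  have hsplit := dropLast_append_wlast hω.1
  have hpw : pw ω = pw ω.dropLast * p (wlast ω) := by
    conv_lhs => rw [← hsplit, pw_append, pw_singleton]
  have hsw : sw ω = sw ω.dropLast * s (wlast ω) := by
    conv_lhs => rw [← hsplit, sw_append, sw_singleton]
  have hp := (p_pos (wlast ω)).ne'
  have hs := (s_pos (wlast ω)).ne'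
  rw [Eainf_eq hsupp hinv hω.2, hpw, hsw, tailRatio]
  field_simp

lemma tailRatio_of_two_le (hsupp : P (Icc 0 1)ᶜ = 0) (hinv : Invariant P)
    {k : ℕ} (hk : 2 ≤ k) : tailRatio P k = tailRatio P 1 / 3 := by
  obtain ⟨m, rfl⟩ := Nat.exists_eq_add_of_le' hk
  rw [tailRatio, tailRatio, show m + 2 = (m + 1) + 1 from rfl, tailError_add hsupp hinv le_rfl,
    show (1 / 8 : ℝ) = (1 / 2) ^ 3 by norm_num, ← pow_mul, one_div_pow]
  simp only [p, s, if_neg (by omega : m + 1 + 1 ≠ 1), if_true]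
  field_simp
  ring

end Measure

/-- For nonempty words `ω, τ` with `p_ω = p_τ`: `E(a(ω)) = E(a(τ))`; if the last letters agree
then `E(a(ω,∞)) = E(a(τ,∞))`; if `ω_k ≥ 2` and `τ_m = 1` then `E(a(ω,∞)) = (1/3) E(a(τ,∞))`;
if `ω_k = 1` and `τ_m ≥ 2` then `E(a(ω,∞)) = 3 E(a(τ,∞))`. -/
theorem stmt_16 (P : Measure ℝ) [IsProbabilityMeasure P]
    (hsupp : P (Set.Icc 0 1) = 1) (hinv : Invariant P)
    (ω τ : List ℕ) (hω : IsWord ω) (hτ : IsWord τ) (h : pw ω = pw τ) :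
    Ea P ω = Ea P τ ∧
    (wlast ω = wlast τ → Eainf P ω = Eainf P τ) ∧
    (2 ≤ wlast ω → wlast τ = 1 → Eainf P ω = (1 / 3) * Eainf P τ) ∧
    (wlast ω = 1 → 2 ≤ wlast τ → Eainf P ω = 3 * Eainf P τ) := by
  have hsupp' : P (Icc 0 1)ᶜ = 0 := (prob_compl_eq_zero_iff measurableSet_Icc).2 hsupp
  have hsw := sw_eq_of_pw_eq h
  rw [Eainf_eq_mul_tailRatio hsupp' hinv hω, Eainf_eq_mul_tailRatio hsupp' hinv hτ, h, hsw]
  refine ⟨?_, fun hlast => by rw [hlast], fun hω2 hτ1 => ?_, fun hω1 hτ2 => ?_⟩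
  · rw [Ea_eq hsupp' hinv hω.2, Ea_eq hsupp' hinv hτ.2, h, hsw]
  · rw [hτ1, tailRatio_of_two_le hsupp' hinv hω2]
    ring
  · rw [hω1, tailRatio_of_two_le hsupp' hinv hτ2]
    ring
end
end
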